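/- The sets of operators {F, ∧, ∨} and {G, ∧, ∨} have the short formula property: for Op ∈ {{F,∧,∨}, {G,∧,∨}} there exists a polynomial P such that for every finite alphabet Σ and every sample (P,N) of nonempty finite words over Σ, if some LTL(Op) formula separates P from N, then some LTL(Op) formula of size at most P(‖P‖ + ‖N‖) separates P from N. -/

import Mathlib

/-- Syntax of LTL (in negation normal form: negation only on atomic formulas). -/
inductive LTL (σ : Type) : Type
  | top   : LTL σ
  | bot   : LTL σ
  | atom  : σ → LTL σ
  | natom : σ → LTL σ
  | conj  : LTL σ → LTL σ → LTL σ
  | disj  : LTL σ → LTL σ → LTL σ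
  | next  : LTL σ → LTL σ
  | ev    : LTL σ → LTL σ
  | glob  : LTL σ → LTL σ
  | untl  : LTL σ → LTL σ → LTL σ

namespace LTL

variable {σ : Type}

/-- Satisfaction of an LTL formula by a finite word (intended for nonempty words).
`w.drop i` is the suffix of `w` starting at (1-indexed) position `i+1`. -/
def sat : LTL σ → List σ → Prop
  | top, _ => True
  | bot, _ => False
  | atom c, w => w.head? = some c
  | natom c, w => w ≠ [] ∧ w.head? ≠ some c
  | conj φ ψ, w => sat φ w ∧ sat ψ w
  | disj φ ψ, w => sat φ w ∨ sat ψ w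
  | next φ, w => 2 ≤ w.length ∧ sat φ w.tail
  | ev φ, w => ∃ i < w.length, sat φ (w.drop i)
  | glob φ, w => ∀ i < w.length, sat φ (w.drop i)
  | untl φ ψ, w => ∃ i < w.length, sat ψ (w.drop i) ∧ ∀ j < i, sat φ (w.drop j)

/-- Size of a formula: the number of nodes of its syntax tree. -/
def size : LTL σ → ℕ
  | top => 1
  | bot => 1
  | atom _ => 1
  | natom _ => 2
  | conj φ ψ => size φ + size ψ + 1
  | disj φ ψ => size φ + size ψ + 1
  | next φ => size φ + 1
  | ev φ => size φ + 1
  | glob φ => size φ + 1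
  | untl φ ψ => size φ + size ψ + 1

/-- The operators of LTL. -/
inductive Op : Type
  | X | F | G | U | And | Or | Not
  deriving DecidableEq

/-- `φ.usesOnly O`: the formula `φ` is built from atomic formulas (and ⊤, ⊥)
using only operators belonging to the set `O`. -/
def usesOnly : LTL σ → Set Op → Prop
  | top, _ => True
  | bot, _ => True
  | atom _, _ => True
  | natom _, O => Op.Not ∈ O
  | conj φ ψ, O => Op.And ∈ O ∧ usesOnly φ O ∧ usesOnly ψ O
  | disj φ ψ, O => Op.Or ∈ O ∧ usesOnly φ O ∧ usesOnly ψ O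
  | next φ, O => Op.X ∈ O ∧ usesOnly φ O
  | ev φ, O => Op.F ∈ O ∧ usesOnly φ O
  | glob φ, O => Op.G ∈ O ∧ usesOnly φ O
  | untl φ ψ, O => Op.U ∈ O ∧ usesOnly φ O ∧ usesOnly ψ O

/-- `φ.constFree`: the constants ⊤ and ⊥ do not occur in `φ`
(for fragments built from atomic formulas only). -/
def constFree : LTL σ → Prop
  | top => False
  | bot => False
  | atom _ => True
  | natom _ => True
  | conj φ ψ => constFree φ ∧ constFree ψ
  | disj φ ψ => constFree φ ∧ constFree ψ
  | next φ => constFree φ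
  | ev φ => constFree φ
  | glob φ => constFree φ
  | untl φ ψ => constFree φ ∧ constFree ψ

/-- Two formulas are equivalent if exactly the same nonempty finite words satisfy them. -/
def Equiv (φ ψ : LTL σ) : Prop := ∀ w : List σ, w ≠ [] → (sat φ w ↔ sat ψ w)

/-- `φ.Separates P N`: every word of `P` satisfies `φ` and no word of `N` does. -/
def Separates (φ : LTL σ) (P N : Finset (List σ)) : Prop :=
  (∀ u ∈ P, sat φ u) ∧ (∀ v ∈ N, ¬ sat φ v)

end LTL

namespace LTLAux

open LTL

variable {σ : Type}

/-! ### Generic big disjunction -/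

def bigDisj (l : List (LTL σ)) : LTL σ := l.foldr LTL.disj LTL.bot

lemma bigDisj_usesOnly {O : Set Op} (hOr : Op.Or ∈ O) (l : List (LTL σ))
    (h : ∀ φ ∈ l, φ.usesOnly O) : (bigDisj l).usesOnly O := by
  induction l with
  | nil => trivial
  | cons a l ih =>
    exact ⟨hOr, h a (by simp), ih fun φ hφ => h φ (by simp [hφ])⟩

lemma bigDisj_sat (l : List (LTL σ)) (w : List σ) :
    sat (bigDisj l) w ↔ ∃ φ ∈ l, sat φ w := by
  induction l with
  | nil => simp [bigDisj, sat]
  | cons a l ih =>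
    simp only [bigDisj, List.foldr_cons] at *
    constructor
    · rintro (h | h)
      · exact ⟨a, by simp, h⟩
      · obtain ⟨φ, hφ, hs⟩ := ih.1 h
        exact ⟨φ, by simp [hφ], hs⟩
    · rintro ⟨φ, hφ, hs⟩
      rcases List.mem_cons.1 hφ with rfl | hφ
      · exact Or.inl hs
      · exact Or.inr (ih.2 ⟨φ, hφ, hs⟩)

lemma bigDisj_size (l : List (LTL σ)) :
    (bigDisj l).size = (l.map LTL.size).sum + l.length + 1 := by
  induction l with
  | nil => simp [bigDisj, LTL.size]
  | cons a l ih =>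
    simp only [bigDisj, List.foldr_cons, List.map_cons, List.sum_cons,
      List.length_cons] at *
    simp [LTL.size, ih]; omega

/-! ### The F fragment -/

def tailF : List σ → LTL σ
  | [] => LTL.top
  | a :: u => LTL.ev (LTL.conj (LTL.atom a) (tailF u))

def phiF : List σ → LTL σ
  | [] => LTL.top
  | a :: u => LTL.conj (LTL.atom a) (tailF u)

lemma tailF_usesOnly {O : Set Op} (hF : Op.F ∈ O) (hAnd : Op.And ∈ O) :
    ∀ u : List σ, (tailF u).usesOnly O
  | [] => trivial
  | a :: u => ⟨hF, hAnd, trivial, tailF_usesOnly hF hAnd u⟩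

lemma phiF_usesOnly {O : Set Op} (hF : Op.F ∈ O) (hAnd : Op.And ∈ O) :
    ∀ u : List σ, (phiF u).usesOnly O
  | [] => trivial
  | a :: u => ⟨hAnd, trivial, tailF_usesOnly hF hAnd u⟩

lemma tailF_size : ∀ u : List σ, (tailF u).size = 3 * u.length + 1
  | [] => rfl
  | a :: u => by simp [tailF, LTL.size, tailF_size u]; ring

lemma phiF_size : ∀ u : List σ, (phiF u).size ≤ 3 * u.length + 3
  | [] => by simp [phiF, LTL.size]
  | a :: u => by simp [phiF, LTL.size, tailF_size u]; omega

lemma tailF_self : ∀ (u : List σ) (c : σ), sat (tailF u) (c :: u)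
  | [], _ => trivial
  | a :: u, c => by
    refine ⟨1, by simp, ?_, ?_⟩
    · simp [sat]
    · simpa using tailF_self u a

lemma phiF_self : ∀ (u : List σ), u ≠ [] → sat (phiF u) u
  | [], h => absurd rfl h
  | a :: u, _ => ⟨rfl, tailF_self u a⟩

/-- key drop lemma for the F fragment -/
lemma tailF_drop : ∀ (i : ℕ) (u v : List σ), i < u.length →
    v.head? = u.head? → sat (tailF u.tail) v →
    ∃ j < v.length, (v.drop j).head? = (u.drop i).head? ∧
      sat (tailF (u.drop i).tail) (v.drop j) := by
  intro i
  induction i with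
  | zero =>
    intro u v hi hh hs
    refine ⟨0, ?_, by simpa using hh, by simpa using hs⟩
    cases u with
    | nil => simp at hi
    | cons a u => cases v with
      | nil => simp at hh
      | cons b v => simp
  | succ k ih =>
    intro u v hi hh hs
    match u, hi with
    | a :: u', hi =>
      have hk : k < u'.length := by simpa using hi
      match u', hk with
      | b :: u'', hk =>
        simp only [List.tail_cons, tailF] at hs
        obtain ⟨m, hm, hhead, hrest⟩ := hs
        obtain ⟨j', hj', hh', hs'⟩ := ih (b :: u'') (v.drop m) hk hhead (by simpa using hrest)
        refine ⟨m + j', ?_, ?_, ?_⟩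
        · have : (v.drop m).length = v.length - m := List.length_drop; omega
        · rw [← List.drop_drop]; simpa using hh'
        · rw [← List.drop_drop]; simpa using hs'

lemma monoF {O : Set Op} (hX : Op.X ∉ O) (hG : Op.G ∉ O) (hU : Op.U ∉ O)
    (hN : Op.Not ∉ O) :
    ∀ ψ : LTL σ, ψ.usesOnly O → ∀ u v : List σ,
      v.head? = u.head? → sat (tailF u.tail) v → sat ψ u → sat ψ v := by
  intro ψ
  induction ψ with
  | top => intro _ _ _ _ _ _; trivial
  | bot => intro _ _ _ _ _ h; exact h.elim
  | atom c => intro _ u v hh _ h; exact hh.trans h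
  | natom c => intro hO; exact absurd hO hN
  | conj φ₁ φ₂ ih₁ ih₂ =>
    intro hO u v hh hs h
    exact ⟨ih₁ hO.2.1 u v hh hs h.1, ih₂ hO.2.2 u v hh hs h.2⟩
  | disj φ₁ φ₂ ih₁ ih₂ =>
    intro hO u v hh hs h
    exact h.elim (fun h => Or.inl (ih₁ hO.2.1 u v hh hs h))
      (fun h => Or.inr (ih₂ hO.2.2 u v hh hs h))
  | next φ ih => intro hO; exact absurd hO.1 hX
  | ev φ ih =>
    intro hO u v hh hs h
    obtain ⟨i, hi, hsat⟩ := h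
    obtain ⟨j, hj, hh', hs'⟩ := tailF_drop i u v hi hh hs
    exact ⟨j, hj, ih hO.2 (u.drop i) (v.drop j) hh' hs' hsat⟩
  | glob φ ih => intro hO; exact absurd hO.1 hG
  | untl φ₁ φ₂ ih₁ ih₂ => intro hO; exact absurd hO.1 hU

/-! ### The G fragment -/

def DG : List σ → LTL σ
  | [] => LTL.bot
  | a :: u => LTL.glob (LTL.disj (LTL.atom a) (DG u))

def phiG : List σ → LTL σ
  | [] => LTL.top
  | a :: u => LTL.conj (LTL.atom a) (DG (a :: u))

inductive Blocks : List σ → List σ → Prop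
  | nil : ∀ u, Blocks u []
  | cons_eq : ∀ a u v, Blocks (a :: u) v → Blocks (a :: u) (a :: v)
  | cons_skip : ∀ a u v, Blocks u v → Blocks (a :: u) v

lemma DG_usesOnly {O : Set Op} (hG : Op.G ∈ O) (hOr : Op.Or ∈ O) :
    ∀ u : List σ, (DG u).usesOnly O
  | [] => trivial
  | a :: u => ⟨hG, hOr, trivial, DG_usesOnly hG hOr u⟩

lemma phiG_usesOnly {O : Set Op} (hG : Op.G ∈ O) (hOr : Op.Or ∈ O)
    (hAnd : Op.And ∈ O) :
    ∀ u : List σ, (phiG u).usesOnly O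
  | [] => trivial
  | a :: u => ⟨hAnd, trivial, DG_usesOnly hG hOr (a :: u)⟩

lemma DG_size : ∀ u : List σ, (DG u).size = 3 * u.length + 1
  | [] => rfl
  | a :: u => by simp [DG, LTL.size, DG_size u]; ring

lemma phiG_size : ∀ u : List σ, (phiG u).size ≤ 3 * u.length + 3
  | [] => by simp [phiG, LTL.size]
  | a :: u => by simp [phiG, LTL.size, DG_size]; omega

lemma blocks_nil_right (u : List σ) : Blocks u [] := Blocks.nil u

lemma blocks_weaken (c : σ) {u v : List σ} (h : Blocks u v) : Blocks (c :: u) v :=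
  Blocks.cons_skip c u v h

lemma blocks_refl : ∀ u : List σ, Blocks u u
  | [] => Blocks.nil []
  | a :: u => Blocks.cons_eq a u u (blocks_weaken a (blocks_refl u))

lemma blocks_tail : ∀ (u : List σ) {b : σ} {v : List σ},
    Blocks u (b :: v) → Blocks u v := by
  intro u
  induction u with
  | nil => intro b v h; cases h
  | cons a u ih =>
    intro b v h
    cases h with
    | cons_eq _ _ _ h' => exact h'
    | cons_skip _ _ _ h' => exact blocks_weaken a (ih h')

lemma blocks_drop {u : List σ} (i : ℕ) : ∀ {v : List σ},
    Blocks u v → Blocks u (v.drop i) := by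
  induction i with
  | zero => intro v h; simpa using h
  | succ k ih =>
    intro v h
    cases v with
    | nil => exact blocks_nil_right _
    | cons b v => exact ih (blocks_tail u h)

lemma sat_DG_of_blocks : ∀ (u v : List σ), v ≠ [] → Blocks u v → sat (DG u) v
  | [], [], h, _ => absurd rfl h
  | [], b :: v, _, hB => by cases hB
  | a :: u, v, hv, hB => by
    intro i hi
    have hne : v.drop i ≠ [] := by
      have : (v.drop i).length = v.length - i := List.length_drop
      intro h
      rw [h] at this
      simp at this
      omega
    have hB' : Blocks (a :: u) (v.drop i) := blocks_drop i hB
    match hw : v.drop i, hne, hB' with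
    | b :: w', _, hB' =>
      cases hB' with
      | cons_eq _ _ _ h' => exact Or.inl rfl
      | cons_skip _ _ _ h' =>
        match u, h' with
        | c :: u'', h' =>
          exact Or.inr (sat_DG_of_blocks (c :: u'') (b :: w') (by simp) h')

lemma blocks_of_sat_DG : ∀ (u v : List σ), sat (DG u) v → Blocks u v
  | [], v, h => False.elim h
  | a :: u, v, h => by
    induction v with
    | nil => exact blocks_nil_right _
    | cons b v ihv =>
      have h0 := h 0 (by simp)
      simp only [List.drop_zero] at h0
      have htail : sat (DG (a :: u)) v := by
        intro i hi
        have := h (i + 1) (by simp; omega)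
        simpa using this
      rcases h0 with h0 | h0
      · have hb : b = a := by
          have : (b :: v).head? = some a := h0
          simpa using this
        subst hb
        exact Blocks.cons_eq b u v (ihv htail)
      · exact Blocks.cons_skip a u (b :: v) (blocks_of_sat_DG u (b :: v) h0)

lemma blocks_suffix : ∀ (u v : List σ), u ≠ [] → v ≠ [] → Blocks u v →
    ∃ i < u.length, (u.drop i).head? = v.head? ∧ Blocks (u.drop i) v := by
  intro u
  induction u with
  | nil => intro v hu; exact absurd rfl hu
  | cons a u ih =>
    intro v _ hv hB
    cases hB with
    | nil => exact absurd rfl hv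
    | cons_eq _ _ v' hB' =>
      exact ⟨0, by simp, by simp, Blocks.cons_eq a u v' hB'⟩
    | cons_skip _ _ _ hB' =>
      cases u with
      | nil => cases hB' with | nil => exact absurd rfl hv
      | cons c u' =>
        obtain ⟨i, hi, hh, hBl⟩ := ih v (by simp) hv hB'
        exact ⟨i + 1, by simpa using Nat.succ_lt_succ hi, by simpa using hh,
          by simpa using hBl⟩

lemma monoG {O : Set Op} (hX : Op.X ∉ O) (hF : Op.F ∉ O) (hU : Op.U ∉ O)
    (hN : Op.Not ∉ O) :
    ∀ ψ : LTL σ, ψ.usesOnly O → ∀ u v : List σ, u ≠ [] → v ≠ [] →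
      v.head? = u.head? → Blocks u v → sat ψ u → sat ψ v := by
  intro ψ
  induction ψ with
  | top => intro _ _ _ _ _ _ _ _; trivial
  | bot => intro _ _ _ _ _ _ _ h; exact h.elim
  | atom c => intro _ u v _ _ hh _ h; exact hh.trans h
  | natom c => intro hO; exact absurd hO hN
  | conj φ₁ φ₂ ih₁ ih₂ =>
    intro hO u v hu hv hh hB h
    exact ⟨ih₁ hO.2.1 u v hu hv hh hB h.1, ih₂ hO.2.2 u v hu hv hh hB h.2⟩
  | disj φ₁ φ₂ ih₁ ih₂ =>
    intro hO u v hu hv hh hB h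
    exact h.elim (fun h => Or.inl (ih₁ hO.2.1 u v hu hv hh hB h))
      (fun h => Or.inr (ih₂ hO.2.2 u v hu hv hh hB h))
  | next φ ih => intro hO; exact absurd hO.1 hX
  | ev φ ih => intro hO; exact absurd hO.1 hF
  | glob φ ih =>
    intro hO u v hu hv hh hB h
    intro j hj
    have hne : v.drop j ≠ [] := by
      have : (v.drop j).length = v.length - j := List.length_drop
      intro hc; rw [hc] at this; simp at this; omega
    have hB' : Blocks u (v.drop j) := blocks_drop j hB
    obtain ⟨i, hi, hh', hBl⟩ := blocks_suffix u (v.drop j) hu hne hB'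
    have hne' : u.drop i ≠ [] := by
      have : (u.drop i).length = u.length - i := List.length_drop
      intro hc; rw [hc] at this; simp at this; omega
    exact ih hO.2 (u.drop i) (v.drop j) hne' hne hh'.symm hBl (h i hi)
  | untl φ₁ φ₂ ih₁ ih₂ => intro hO; exact absurd hO.1 hU

lemma phiG_self : ∀ (u : List σ), u ≠ [] → sat (phiG u) u
  | [], h => absurd rfl h
  | a :: u, _ => ⟨rfl, sat_DG_of_blocks (a :: u) (a :: u) (by simp) (blocks_refl _)⟩

/-! ### Assembly -/

lemma assemble (Ops : Set LTL.Op) (hOr : LTL.Op.Or ∈ Ops)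
    (phi : (σ : Type) → List σ → LTL σ)
    (huses : ∀ (σ : Type) (u : List σ), (phi σ u).usesOnly Ops)
    (hsize : ∀ (σ : Type) (u : List σ), (phi σ u).size ≤ 3 * u.length + 3)
    (hself : ∀ (σ : Type) (u : List σ), u ≠ [] → sat (phi σ u) u)
    (hmono : ∀ (σ : Type) (u v : List σ), u ≠ [] → v ≠ [] → sat (phi σ u) v →
      ∀ ψ : LTL σ, ψ.usesOnly Ops → sat ψ u → sat ψ v) :
    ∀ (σ : Type) (P N : Finset (List σ)),
      (∀ w ∈ P, w ≠ []) → (∀ w ∈ N, w ≠ []) →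
      (∃ φ : LTL σ, φ.usesOnly Ops ∧ φ.Separates P N) →
      ∃ φ : LTL σ, φ.usesOnly Ops ∧
        φ.size ≤ 10 * ((∑ w ∈ P, w.length) + (∑ w ∈ N, w.length)) + 10 ∧
        φ.Separates P N := by
  intro σ P N hP hN ⟨ψ₀, hψ₀O, hψ₀P, hψ₀N⟩
  set l : List (LTL σ) := P.toList.map (phi σ) with hl
  refine ⟨bigDisj l, ?_, ?_, ?_, ?_⟩
  · exact bigDisj_usesOnly hOr l (by
      intro φ hφ
      obtain ⟨u, _, rfl⟩ := List.mem_map.1 hφ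
      exact huses σ u)
  · -- size bound
    rw [bigDisj_size]
    have h1 : (l.map LTL.size).sum ≤ ∑ u ∈ P, (3 * u.length + 3) := by
      rw [hl, List.map_map]
      calc (P.toList.map (LTL.size ∘ phi σ)).sum
          ≤ (P.toList.map (fun u => 3 * u.length + 3)).sum := by
            apply List.sum_le_sum
            intro u hu
            exact hsize σ u
        _ = ∑ u ∈ P, (3 * u.length + 3) := Finset.sum_map_toList P _
    have h2 : l.length = P.card := by simp [hl]
    have h3 : P.card ≤ ∑ u ∈ P, u.length := by
      calc P.card = ∑ _u ∈ P, 1 := by simp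
        _ ≤ ∑ u ∈ P, u.length := by
            apply Finset.sum_le_sum
            intro u hu
            have := hP u hu
            cases u with
            | nil => exact absurd rfl this
            | cons a u => simp
    have h4 : ∑ u ∈ P, (3 * u.length + 3) = 3 * (∑ u ∈ P, u.length) + 3 * P.card := by
      rw [Finset.sum_add_distrib, ← Finset.mul_sum]
      simp [Finset.sum_const, mul_comm]
    omega
  · -- positive words
    intro u hu
    rw [bigDisj_sat]
    exact ⟨phi σ u, List.mem_map.2 ⟨u, Finset.mem_toList.2 hu, rfl⟩, hself σ u (hP u hu)⟩
  · -- negative words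
    intro v hv hsat
    rw [bigDisj_sat] at hsat
    obtain ⟨φ, hφ, hsφ⟩ := hsat
    obtain ⟨u, huP, rfl⟩ := List.mem_map.1 hφ
    have huP' := Finset.mem_toList.1 huP
    have : sat ψ₀ v :=
      hmono σ u v (hP u huP') (hN v hv) hsφ ψ₀ hψ₀O (hψ₀P u huP')
    exact hψ₀N v hv this

lemma not_mem_FAndOr (x : Op) (h : x ≠ Op.F) (h2 : x ≠ Op.And) (h3 : x ≠ Op.Or) :
    x ∉ ({Op.F, Op.And, Op.Or} : Set Op) := by
  simp [Set.mem_insert_iff, Set.mem_singleton_iff, h, h2, h3]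

lemma not_mem_GAndOr (x : Op) (h : x ≠ Op.G) (h2 : x ≠ Op.And) (h3 : x ≠ Op.Or) :
    x ∉ ({Op.G, Op.And, Op.Or} : Set Op) := by
  simp [Set.mem_insert_iff, Set.mem_singleton_iff, h, h2, h3]

end LTLAux

/-- the operator sets `{F, ∧, ∨}` and `{G, ∧, ∨}` have the short formula
property. -/
theorem short_formula_property_F_and_or_G_and_or (Ops : Set LTL.Op)
    (hOps : Ops = {LTL.Op.F, LTL.Op.And, LTL.Op.Or} ∨
            Ops = {LTL.Op.G, LTL.Op.And, LTL.Op.Or}) :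
    ∃ p : Polynomial ℕ, ∀ (σ : Type) [Fintype σ] (P N : Finset (List σ)),
      (∀ w ∈ P, w ≠ []) → (∀ w ∈ N, w ≠ []) →
      (∃ φ : LTL σ, φ.usesOnly Ops ∧ φ.Separates P N) →
      ∃ φ : LTL σ, φ.usesOnly Ops ∧
        φ.size ≤ p.eval ((∑ w ∈ P, w.length) + (∑ w ∈ N, w.length)) ∧
        φ.Separates P N := by
  refine ⟨Polynomial.C 10 * Polynomial.X + Polynomial.C 10, ?_⟩
  intro σ _ P N hP hN hex
  have heval : (Polynomial.C 10 * Polynomial.X + Polynomial.C 10 : Polynomial ℕ).eval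
      ((∑ w ∈ P, w.length) + (∑ w ∈ N, w.length)) =
      10 * ((∑ w ∈ P, w.length) + (∑ w ∈ N, w.length)) + 10 := by
    simp
  rw [heval]
  rcases hOps with rfl | rfl
  · -- F, And, Or
    refine LTLAux.assemble _ (by simp) (fun σ u => LTLAux.phiF u)
      (fun σ u => LTLAux.phiF_usesOnly (by simp) (by simp) u)
      (fun σ u => LTLAux.phiF_size u)
      (fun σ u h => LTLAux.phiF_self u h)
      ?_ σ P N hP hN hex
    intro σ u v hu hv hsφ ψ hψO hψu
    match u, hu with
    | a :: u', _ =>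
      obtain ⟨hh, hs⟩ := hsφ
      exact LTLAux.monoF
        (LTLAux.not_mem_FAndOr _ (by simp) (by simp) (by simp))
        (LTLAux.not_mem_FAndOr _ (by simp) (by simp) (by simp))
        (LTLAux.not_mem_FAndOr _ (by simp) (by simp) (by simp))
        (LTLAux.not_mem_FAndOr _ (by simp) (by simp) (by simp))
        ψ hψO (a :: u') v (by simpa [LTL.sat] using hh) (by simpa using hs) hψu
  · -- G, And, Or
    refine LTLAux.assemble _ (by simp) (fun σ u => LTLAux.phiG u)
      (fun σ u => LTLAux.phiG_usesOnly (by simp) (by simp) (by simp) u)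
      (fun σ u => LTLAux.phiG_size u)
      (fun σ u h => LTLAux.phiG_self u h)
      ?_ σ P N hP hN hex
    intro σ u v hu hv hsφ ψ hψO hψu
    match u, hu with
    | a :: u', _ =>
      obtain ⟨hh, hs⟩ := hsφ
      have hB : LTLAux.Blocks (a :: u') v := LTLAux.blocks_of_sat_DG _ v hs
      exact LTLAux.monoG
        (LTLAux.not_mem_GAndOr _ (by simp) (by simp) (by simp))
        (LTLAux.not_mem_GAndOr _ (by simp) (by simp) (by simp))
        (LTLAux.not_mem_GAndOr _ (by simp) (by simp) (by simp))
        (LTLAux.not_mem_GAndOr _ (by simp) (by simp) (by simp))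
        ψ hψO (a :: u') v (by simp) hv (by simpa [LTL.sat] using hh) hB hψu
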